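/- Let 𝐀 = (A^(k), p^(k,k+1))_{k∈ω} be a tower of proper Polish cochain complexes that is split epimorphic, i.e., for every k and n the continuous homomorphism (p^(k,k+1))^n : (A^(k+1))^n → (A^(k))^n admits a continuous group-homomorphism right inverse. Let lim 𝐀 be the Polish cochain complex with (lim 𝐀)^n the inverse limit of the groups (A^(k))^n, with the induced codifferentials, and let Local : H^n(lim 𝐀) → ∏_{k∈ω} H^n(A^(k)) send the class of a cocycle z = (z_k)_k to ([z_k])_k. Then for every n ∈ ℤ: (i) the image of Local equals the inverse limit lim_k H^n(A^(k)); and (ii) the kernel of Local equals H^n_∞(lim 𝐀), i.e., for a cocycle z, Local([z]) = 0 if and only if z lies in the closure of B^n(lim 𝐀) in (lim 𝐀)^n. -/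

import Mathlib

/-!
Split epimorphic means in particular that the bonding maps are surjective, so every element at
a finite stage extends to a thread of the tower. For (i), a family of cocycles `h` whose
successive differences are coboundaries `δ W_k` is corrected inductively to the thread
`h_k + δ g_k`, where `g_{k+1}` is a lift of `g_k - W_k`. For (ii), if every `z_k = δ v_k`, then
`δ` of a thread through `v_K` agrees with `z` up to level `K`, so these coboundaries of
`lim 𝐀` converge to `z`; conversely, by properness each `z_k` stays in the closed set
`B(A^(k))` when `z` is a limit of coboundaries.
-/

open Function Set

def IsThread {C : ℕ → Type*} (q : ∀ l, C (l + 1) → C l) (T : ∀ l, C l) : Prop :=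
  ∀ l, q l (T (l + 1)) = T l

namespace IsThread

variable {C : ℕ → Type*} {q : ∀ l, C (l + 1) → C l}

theorem eq_of_le {T T' : ∀ l, C l} (hT : IsThread q T) (hT' : IsThread q T') {k K : ℕ}
    (hkK : k ≤ K) (hK : T K = T' K) : T k = T' k := by
  induction hkK using Nat.decreasingInduction with
  | self => exact hK
  | of_succ l _ ih => rw [← hT l, ← hT' l, ih]

end IsThread

theorem exists_isThread_eq {C : ℕ → Type*} (q : ∀ l, C (l + 1) → C l)
    (hq : ∀ l, Surjective (q l)) (K : ℕ) (v : C K) :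
    ∃ T : ∀ l, C l, IsThread q T ∧ T K = v := by
  induction K generalizing C with
  | zero =>
    choose s hs using hq
    exact ⟨fun l => Nat.rec (motive := C) v s l, fun l => hs l _, rfl⟩
  | succ K ih =>
    -- a thread of the shifted tower `l ↦ C (l + 1)`, extended by one term at the bottom
    obtain ⟨T, hT, hTK⟩ :=
      ih (C := fun l => C (l + 1)) (fun l => q (l + 1)) (fun l => hq (l + 1)) v
    refine ⟨fun | 0 => q 0 (T 0) | l + 1 => T l, ?_, hTK⟩
    rintro (_ | l)
    · rfl
    · exact hT l

section Cochains

variable {X Y : ℕ → Type*}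

theorem exists_isThread_add_of_sub_mem_range [∀ l, AddCommGroup (X l)]
    [∀ l, AddCommGroup (Y l)] (d : ∀ l, X l →+ Y l) (q : ∀ l, X (l + 1) → X l)
    (hq : ∀ l, Surjective (q l)) (q' : ∀ l, Y (l + 1) →+ Y l)
    (hd : ∀ l x, q' l (d (l + 1) x) = d l (q l x)) (h : ∀ l, Y l)
    (hh : ∀ l, ∃ w, q' l (h (l + 1)) - h l = d l w) :
    ∃ g : ∀ l, X l, IsThread (fun l => q' l) fun l => h l + d l (g l) := by
  choose s hs using hq
  choose W hW using hh
  let g : ∀ l, X l := fun l => Nat.rec (motive := X) 0 (fun l gl => s l (gl - W l)) l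
  refine ⟨g, fun l => ?_⟩
  dsimp only
  have hg : q l (g (l + 1)) = g l - W l := hs l _
  rw [map_add, hd, hg, map_sub, eq_add_of_sub_eq (hW l)]
  abel

theorem mem_closure_image_threads_of_forall_mem_range [∀ l, TopologicalSpace (Y l)]
    (d : ∀ l, X l → Y l) (q : ∀ l, X (l + 1) → X l) (hq : ∀ l, Surjective (q l))
    (q' : ∀ l, Y (l + 1) → Y l) (hd : ∀ l x, q' l (d (l + 1) x) = d l (q l x))
    {z : ∀ l, Y l} (hz : IsThread q' z) (hzd : ∀ l, z l ∈ range (d l)) :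
    z ∈ closure {y | ∃ w : ∀ l, X l, IsThread q w ∧ y = fun l => d l (w l)} := by
  choose v hv using hzd
  choose w hw hwK using fun K => exists_isThread_eq q hq K (v K)
  have hdw : ∀ K, IsThread q' fun l => d l (w K l) := fun K l => by rw [hd, hw K l]
  have hagree : ∀ K l, l ≤ K → d l (w K l) = z l := fun K l hlK =>
    (hdw K).eq_of_le hz hlK (by rw [hwK, hv])
  refine mem_closure_of_tendsto (f := fun K l => d l (w K l)) (b := Filter.atTop) ?_
    (Filter.Eventually.of_forall fun K => ⟨w K, hw K, rfl⟩)
  refine tendsto_pi_nhds.mpr fun l => tendsto_const_nhds.congr' ?_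
  exact Filter.eventually_atTop.mpr ⟨l, fun K hlK => (hagree K l hlK).symm⟩

end Cochains

theorem local_image_and_kernel_for_lim_of_split_epimorphic_tower_general
    (A : ℕ → ℤ → Type*)
    [∀ k n, AddCommGroup (A k n)] [∀ k n, TopologicalSpace (A k n)]
    (δ : ∀ (k : ℕ) (n : ℤ), A k n →+ A k (n + 1))
    (hδδ : ∀ (k : ℕ) (n : ℤ) (x : A k n), δ k (n + 1) (δ k n x) = 0)
    -- properness
    (hproper : ∀ (k : ℕ) (n : ℤ), IsClosed ((δ k n).range : Set (A k (n + 1))))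
    -- bonding cochain maps
    (p : ∀ (k : ℕ) (n : ℤ), A (k + 1) n →+ A k n)
    (hpchain : ∀ (k : ℕ) (n : ℤ) (x : A (k + 1) n), p k (n + 1) (δ (k + 1) n x) = δ k n (p k n x))
    -- split epimorphic: each bonding map admits a continuous additive right inverse
    (hsplit : ∀ (k : ℕ) (n : ℤ), ∃ s : A k n →+ A (k + 1) n,
      Continuous s ∧ ∀ x, p k n (s x) = x) :
    ∀ m : ℤ,
      -- (i) the image of Local is the inverse limit lim_k H^{m+1}(A^(k)):
      -- (⊆) classes of the components of a compatible cocycle form a compatible family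
      ((∀ z : ∀ k, A k (m + 1),
          (∀ k, p k (m + 1) (z (k + 1)) = z k) → (∀ k, δ k (m + 1) (z k) = 0) →
            ∀ k, ∃ w : A k m, p k (m + 1) (z (k + 1)) - z k = δ k m w) ∧
        -- (⊇) every compatible family of classes is realized by a compatible cocycle
        (∀ h : ∀ k, A k (m + 1),
          (∀ k, δ k (m + 1) (h k) = 0) →
          (∀ k, ∃ w : A k m, p k (m + 1) (h (k + 1)) - h k = δ k m w) →
          ∃ z : ∀ k, A k (m + 1),
            (∀ k, p k (m + 1) (z (k + 1)) = z k) ∧ (∀ k, δ k (m + 1) (z k) = 0) ∧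
            ∀ k, ∃ w : A k m, z k - h k = δ k m w)) ∧
      -- (ii) the kernel of Local is the closure of the coboundaries modulo coboundaries
      (∀ z : ∀ k, A k (m + 1),
        (∀ k, p k (m + 1) (z (k + 1)) = z k) → (∀ k, δ k (m + 1) (z k) = 0) →
        ((∀ k, ∃ w : A k m, z k = δ k m w) ↔
          z ∈ closure {y : ∀ k, A k (m + 1) |
            ∃ w : ∀ k, A k m, (∀ k, p k m (w (k + 1)) = w k) ∧
              y = fun k => δ k m (w k)})) := by
  intro m
  have hsurj : ∀ k, Surjective (p k m) := fun k =>
    let ⟨s, _, hs⟩ := hsplit k m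
    LeftInverse.surjective hs
  refine ⟨⟨fun z hz _ k => ⟨0, by rw [hz k, sub_self, map_zero]⟩, fun h hcoc hcomp => ?_⟩,
    fun z hz _ => ⟨fun hcb => ?_, fun hcl k => ?_⟩⟩
  · obtain ⟨g, hg⟩ := exists_isThread_add_of_sub_mem_range (fun k => δ k m) (fun k => p k m)
      hsurj (fun k => p k (m + 1)) (hpchain · m) h hcomp
    refine ⟨fun k => h k + δ k m (g k), hg, fun k => ?_, fun k => ⟨g k, add_sub_cancel_left _ _⟩⟩
    rw [map_add, hcoc, hδδ, add_zero]
  · exact mem_closure_image_threads_of_forall_mem_range (fun k => δ k m) (fun k => p k m) hsurj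
      (fun k => p k (m + 1)) (hpchain · m) hz fun k => (hcb k).imp fun _ => Eq.symm
  · have hzk := map_mem_closure (continuous_apply k) hcl (t := (δ k m).range)
      (by rintro _ ⟨w, -, rfl⟩; exact ⟨w k, rfl⟩)
    obtain ⟨w, hw⟩ := (hproper k m).closure_eq ▸ hzk
    exact ⟨w, hw.symm⟩

theorem local_image_and_kernel_for_lim_of_split_epimorphic_tower
    (A : ℕ → ℤ → Type*)
    [∀ k n, AddCommGroup (A k n)] [∀ k n, TopologicalSpace (A k n)]
    [∀ k n, IsTopologicalAddGroup (A k n)] [∀ k n, PolishSpace (A k n)]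
    (δ : ∀ (k : ℕ) (n : ℤ), A k n →+ A k (n + 1))
    (hδc : ∀ k n, Continuous (δ k n))
    (hδδ : ∀ (k : ℕ) (n : ℤ) (x : A k n), δ k (n + 1) (δ k n x) = 0)
    -- properness
    (hproper : ∀ (k : ℕ) (n : ℤ), IsClosed ((δ k n).range : Set (A k (n + 1))))
    -- bonding cochain maps
    (p : ∀ (k : ℕ) (n : ℤ), A (k + 1) n →+ A k n)
    (hpc : ∀ k n, Continuous (p k n))
    (hpchain : ∀ (k : ℕ) (n : ℤ) (x : A (k + 1) n), p k (n + 1) (δ (k + 1) n x) = δ k n (p k n x))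
    -- split epimorphic: each bonding map admits a continuous additive right inverse
    (hsplit : ∀ (k : ℕ) (n : ℤ), ∃ s : A k n →+ A (k + 1) n,
      Continuous s ∧ ∀ x, p k n (s x) = x) :
    ∀ m : ℤ,
      -- (i) the image of Local is the inverse limit lim_k H^{m+1}(A^(k)):
      -- (⊆) classes of the components of a compatible cocycle form a compatible family
      ((∀ z : ∀ k, A k (m + 1),
          (∀ k, p k (m + 1) (z (k + 1)) = z k) → (∀ k, δ k (m + 1) (z k) = 0) →
            ∀ k, ∃ w : A k m, p k (m + 1) (z (k + 1)) - z k = δ k m w) ∧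
        -- (⊇) every compatible family of classes is realized by a compatible cocycle
        (∀ h : ∀ k, A k (m + 1),
          (∀ k, δ k (m + 1) (h k) = 0) →
          (∀ k, ∃ w : A k m, p k (m + 1) (h (k + 1)) - h k = δ k m w) →
          ∃ z : ∀ k, A k (m + 1),
            (∀ k, p k (m + 1) (z (k + 1)) = z k) ∧ (∀ k, δ k (m + 1) (z k) = 0) ∧
            ∀ k, ∃ w : A k m, z k - h k = δ k m w)) ∧
      -- (ii) the kernel of Local is the closure of the coboundaries modulo coboundaries
      (∀ z : ∀ k, A k (m + 1),
        (∀ k, p k (m + 1) (z (k + 1)) = z k) → (∀ k, δ k (m + 1) (z k) = 0) →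
        ((∀ k, ∃ w : A k m, z k = δ k m w) ↔
          z ∈ closure {y : ∀ k, A k (m + 1) |
            ∃ w : ∀ k, A k m, (∀ k, p k m (w (k + 1)) = w k) ∧
              y = fun k => δ k m (w k)})) :=
  local_image_and_kernel_for_lim_of_split_epimorphic_tower_general A δ hδδ hproper p hpchain hsplit
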